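/- arXiv:1102.4738 — 5 statements merged into one kernel-verified Lean document; each statement's English description precedes it below -/
import Mathlib

section
/- The Jacobian determinant of the squaring map Φ_Id : M(2;ℂ) → M(2;ℂ), M ↦ M², at a matrix M equals 4·(tr M)²·det M. -/
/-- Identify M(2;ℂ) with ℂ⁴ via (x,y,z,t); the squaring map in coordinates. -/
noncomputable def PhiId : (Fin 4 → ℂ) → (Fin 4 → ℂ) := fun p =>
  ![p 0 ^ 2 + p 1 * p 2, p 1 * (p 0 + p 3), p 2 * (p 0 + p 3), p 3 ^ 2 + p 1 * p 2]

noncomputable def jacobianPhiId (p : Fin 4 → ℂ) : Matrix (Fin 4) (Fin 4) ℂ :=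
  !![2 * p 0, p 2, p 1, 0;
     p 1, p 0 + p 3, 0, p 1;
     p 2, 0, p 0 + p 3, p 2;
     0, p 2, p 1, 2 * p 3]

theorem hasFDerivAt_PhiId (p : Fin 4 → ℂ) :
    HasFDerivAt PhiId (Matrix.toLin' (jacobianPhiId p)).toContinuousLinearMap p := by
  have hx (j : Fin 4) : HasFDerivAt (fun x : Fin 4 → ℂ => x j)
      (ContinuousLinearMap.proj (R := ℂ) (φ := fun _ : Fin 4 => ℂ) j) p :=
    hasFDerivAt_apply j p
  refine hasFDerivAt_pi'' fun i => ?_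
  fin_cases i <;>
  [refine (((hx 0).pow 2).add ((hx 1).mul (hx 2))).congr_fderiv ?_;
   refine ((hx 1).mul ((hx 0).add (hx 3))).congr_fderiv ?_;
   refine ((hx 2).mul ((hx 0).add (hx 3))).congr_fderiv ?_;
   refine (((hx 3).pow 2).add ((hx 1).mul (hx 2))).congr_fderiv ?_] <;>
  · ext v
    simp [jacobianPhiId, dotProduct, Fin.sum_univ_four]
    ring

theorem det_jacobianPhiId (p : Fin 4 → ℂ) :
    (jacobianPhiId p).det = 4 * (p 0 + p 3) ^ 2 * (p 0 * p 3 - p 1 * p 2) := by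
  simp [jacobianPhiId, Matrix.det_succ_row_zero, Fin.sum_univ_succ, Fin.succAbove]
  ring

theorem jacobian_det_of_squaring (p : Fin 4 → ℂ) :
    LinearMap.det ((fderiv ℂ PhiId p : (Fin 4 → ℂ) →L[ℂ] (Fin 4 → ℂ)) :
        (Fin 4 → ℂ) →ₗ[ℂ] (Fin 4 → ℂ)) =
      4 * (p 0 + p 3) ^ 2 * (p 0 * p 3 - p 1 * p 2) := by
  rw [(hasFDerivAt_PhiId p).fderiv, LinearMap.coe_toContinuousLinearMap, LinearMap.det_toLin',
    det_jacobianPhiId]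
end

section
/- Let Φ : M(2;ℂ) → M(2;ℂ) be compatible with conjugation (Φ(AMA⁻¹) = AΦ(M)A⁻¹ for all invertible A). Then for every M, Φ(M) commutes with M. -/
/-!
A unit `u` commuting with `M` fixes `M` under conjugation, so by equivariance it also fixes
`Φ M`, i.e. commutes with `Φ M`. Over an infinite field some `c • 1 - M` avoids the finitely
many roots of the characteristic polynomial and is such a unit; since `M = c • 1 - (c • 1 - M)`,
`M` commutes with `Φ M` as well.
-/

theorem Units.commute_map_of_conj_equivariant {M : Type*} [Monoid M] {Φ : M → M}
    (hΦ : ∀ (u : Mˣ) (x : M), Φ (u * x * ↑u⁻¹) = u * Φ x * ↑u⁻¹) {u : Mˣ} {x : M}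
    (h : Commute (u : M) x) : Commute (u : M) (Φ x) := by
  have hx : (u : M) * x * ↑u⁻¹ = x := (Units.mul_inv_eq_iff_eq_mul u).mpr h.eq
  have hfix : (u : M) * Φ x * ↑u⁻¹ = Φ x := by rw [← hΦ, hx]
  exact (Units.mul_inv_eq_iff_eq_mul u).mp hfix

theorem Matrix.exists_isUnit_scalar_sub {n K : Type*} [Fintype n] [DecidableEq n] [Field K]
    [Infinite K] (M : Matrix n n K) : ∃ c : K, IsUnit (scalar n c - M) := by
  by_contra! h
  refine M.charpoly_monic.ne_zero (Polynomial.zero_of_eval_zero _ fun c => ?_)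
  rw [eval_charpoly]
  by_contra hdet
  exact h c ((isUnit_iff_isUnit_det _).mpr (Ne.isUnit hdet))

theorem Matrix.commute_map_self_of_conj_equivariant {n K : Type*} [Fintype n] [DecidableEq n]
    [Field K] [Infinite K] {Φ : Matrix n n K → Matrix n n K}
    (hΦ : ∀ (A : GL n K) (M : Matrix n n K),
      Φ (A * M * ((A⁻¹ : GL n K) : Matrix n n K)) = A * Φ M * ((A⁻¹ : GL n K) : Matrix n n K))
    (M : Matrix n n K) : Commute M (Φ M) := by
  obtain ⟨c, u, hu⟩ := M.exists_isUnit_scalar_sub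
  have hc : ∀ N : Matrix n n K, Commute (scalar n c) N := scalar_commute c (.all c)
  have huΦ : Commute (u : Matrix n n K) (Φ M) :=
    Units.commute_map_of_conj_equivariant hΦ (hu ▸ (hc M).sub_left (.refl M))
  rw [hu] at huΦ
  have h := (hc (Φ M)).sub_left huΦ
  rwa [sub_sub_cancel] at h

theorem commutes_of_conj_compatible
    (Φ : Matrix (Fin 2) (Fin 2) ℂ → Matrix (Fin 2) (Fin 2) ℂ)
    (hΦ : ∀ A : GL (Fin 2) ℂ, ∀ M : Matrix (Fin 2) (Fin 2) ℂ,
      Φ ((A : Matrix (Fin 2) (Fin 2) ℂ) * M * ((A⁻¹ : GL (Fin 2) ℂ) : Matrix (Fin 2) (Fin 2) ℂ)) =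
        (A : Matrix (Fin 2) (Fin 2) ℂ) * Φ M * ((A⁻¹ : GL (Fin 2) ℂ) : Matrix (Fin 2) (Fin 2) ℂ)) :
    ∀ M : Matrix (Fin 2) (Fin 2) ℂ, M * Φ M = Φ M * M := fun M =>
  (Matrix.commute_map_self_of_conj_equivariant hΦ M).eq
end

section
/- A monic quadratic polynomial P(z) = z² − bz + c over ℂ has one root of modulus 1 and the other of modulus at most 1 if and only if |c|² − (1/2)|b|² − (1/2)|b² − 4c| + 1 = 0 and |c| ≤ 1. -/
/-!
Writing `b = λ₁ + λ₂`, `c = λ₁ λ₂`, the discriminant is `b² - 4c = (λ₁ - λ₂)²`, and the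
parallelogram law turns `|c|² - ½|b|² - ½|b² - 4c| + 1` into `(|λ₁|² - 1)(|λ₂|² - 1)`.
So the equation says that some root lies on the unit circle, and then `|c| ≤ 1` says exactly
that the other root lies in the closed unit disc.
-/

lemma exists_add_eq_and_mul_eq {K : Type*} [Field K] [IsAlgClosed K] [NeZero (2 : K)]
    (b c : K) : ∃ l₁ l₂ : K, l₁ + l₂ = b ∧ l₁ * l₂ = c := by
  obtain ⟨d, hd⟩ := IsAlgClosed.exists_pow_nat_eq (b ^ 2 - 4 * c) two_pos
  have h2 : (2 : K) ≠ 0 := two_ne_zero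
  refine ⟨(b + d) / 2, (b - d) / 2, by field_simp; ring, ?_⟩
  field_simp
  linear_combination -hd

lemma sq_norm_sub_one_mul_sq_norm_sub_one (l₁ l₂ : ℂ) :
    (‖l₁‖ ^ 2 - 1) * (‖l₂‖ ^ 2 - 1) =
      ‖l₁ * l₂‖ ^ 2 - (1 / 2) * ‖l₁ + l₂‖ ^ 2
        - (1 / 2) * ‖(l₁ + l₂) ^ 2 - 4 * (l₁ * l₂)‖ + 1 := by
  have discrim_eq : (l₁ + l₂) ^ 2 - 4 * (l₁ * l₂) = (l₁ - l₂) ^ 2 := by ring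
  rw [discrim_eq, norm_pow, norm_mul, mul_pow, Complex.sq_norm, Complex.sq_norm,
    Complex.sq_norm, Complex.sq_norm, Complex.normSq_add, Complex.normSq_sub]
  ring

lemma sq_sub_one_mul_sq_sub_one_eq_zero_and_mul_le_one_iff {x y : ℝ} (hx : 0 ≤ x)
    (hy : 0 ≤ y) :
    (x ^ 2 - 1) * (y ^ 2 - 1) = 0 ∧ x * y ≤ 1 ↔ (x = 1 ∧ y ≤ 1) ∨ (y = 1 ∧ x ≤ 1) := by
  have sq_eq_one {t : ℝ} (ht : 0 ≤ t) : t ^ 2 - 1 = 0 ↔ t = 1 := by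
    rw [sub_eq_zero, pow_eq_one_iff_of_nonneg ht two_ne_zero]
  rw [mul_eq_zero, sq_eq_one hx, sq_eq_one hy]
  constructor
  · rintro ⟨rfl | rfl, hxy⟩
    · exact Or.inl ⟨rfl, by simpa using hxy⟩
    · exact Or.inr ⟨rfl, by simpa using hxy⟩
  · rintro (⟨rfl, hy1⟩ | ⟨rfl, hx1⟩)
    · exact ⟨Or.inl rfl, by simpa using hy1⟩
    · exact ⟨Or.inr rfl, by simpa using hx1⟩

lemma root_modulus_criterion_of_roots (l₁ l₂ : ℂ) :
    (‖l₁ * l₂‖ ^ 2 - (1 / 2) * ‖l₁ + l₂‖ ^ 2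
        - (1 / 2) * ‖(l₁ + l₂) ^ 2 - 4 * (l₁ * l₂)‖ + 1 = 0 ∧ ‖l₁ * l₂‖ ≤ 1) ↔
      (‖l₁‖ = 1 ∧ ‖l₂‖ ≤ 1) ∨ (‖l₂‖ = 1 ∧ ‖l₁‖ ≤ 1) := by
  rw [← sq_norm_sub_one_mul_sq_norm_sub_one, norm_mul,
    sq_sub_one_mul_sq_sub_one_eq_zero_and_mul_le_one_iff (norm_nonneg _) (norm_nonneg _)]

theorem root_modulus_criterion (b c : ℂ) :
    (∃ l₁ l₂ : ℂ, l₁ + l₂ = b ∧ l₁ * l₂ = c ∧ ‖l₁‖ = 1 ∧ ‖l₂‖ ≤ 1) ↔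
      (‖c‖ ^ 2 - (1 / 2) * ‖b‖ ^ 2
          - (1 / 2) * ‖b ^ 2 - 4 * c‖ + 1 = 0 ∧ ‖c‖ ≤ 1) := by
  constructor
  · rintro ⟨l₁, l₂, rfl, rfl, h₁, h₂⟩
    exact (root_modulus_criterion_of_roots l₁ l₂).2 (Or.inl ⟨h₁, h₂⟩)
  · intro h
    obtain ⟨l₁, l₂, rfl, rfl⟩ := exists_add_eq_and_mul_eq b c
    rcases (root_modulus_criterion_of_roots l₁ l₂).1 h with ⟨h₁, h₂⟩ | ⟨h₂, h₁⟩
    · exact ⟨l₁, l₂, rfl, rfl, h₁, h₂⟩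
    · exact ⟨l₂, l₁, add_comm _ _, mul_comm _ _, h₂, h₁⟩
end

section
/- For a linear map ψ : M(2;ℂ) → M(2;ℂ) satisfying M·ψ(M) + ψ(M)·M = 0 for all 2×2 complex matrices M, one has ψ = 0. -/
/-!
The identity at `1` reads `2 ψ(1) = 0`. Given that, the identity at `M + 1` differs from the one
at `M` by exactly `2 ψ(M)`, so `ψ(M) = 0` as soon as the target has no `2`-torsion.
-/

namespace AddMonoidHom

variable {A : Type*} [NonAssocRing A] [IsAddTorsionFree A] {ψ : A →+ A}

theorem map_one_eq_zero_of_anticommute (h : ∀ a, a * ψ a + ψ a * a = 0) : ψ 1 = 0 := by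
  have h₁ := h 1
  rw [one_mul, mul_one, ← two_nsmul] at h₁
  exact (smul_eq_zero.mp h₁).resolve_left two_ne_zero

theorem eq_zero_of_anticommute (h : ∀ a, a * ψ a + ψ a * a = 0) : ψ = 0 := by
  ext a
  have h_succ : (a + 1) * ψ a + ψ a * (a + 1) = 0 := by
    simpa [map_one_eq_zero_of_anticommute h] using h (a + 1)
  have h_two : 2 • ψ a = 0 :=
    calc 2 • ψ a = ((a + 1) * ψ a + ψ a * (a + 1)) - (a * ψ a + ψ a * a) := by
          rw [two_nsmul, add_mul, mul_add, one_mul, mul_one]; abel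
      _ = 0 := by rw [h_succ, h a, sub_zero]
  exact (smul_eq_zero.mp h_two).resolve_left two_ne_zero

end AddMonoidHom

theorem linear_anticommuting_is_zero
    (ψ : Matrix (Fin 2) (Fin 2) ℂ →ₗ[ℂ] Matrix (Fin 2) (Fin 2) ℂ)
    (h : ∀ M : Matrix (Fin 2) (Fin 2) ℂ, M * ψ M + ψ M * M = 0) :
    ψ = 0 := by
  have : IsAddTorsionFree (Matrix (Fin 2) (Fin 2) ℂ) := .of_module_rat _
  exact LinearMap.toAddMonoidHom_injective (ψ.toAddMonoidHom.eq_zero_of_anticommute h)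
end

section
/- Let A = [[1,1],[0,1]] and Φ_A(M) = A·M². For upper triangular matrices, the n-th iterate satisfies Φ_Aⁿ([[x,y],[0,t]]) = [[x^(2^n), Bₙ(x,t)·y + Cₙ(x,t)],[0, t^(2^n)]] where Bₙ(x,t) = ∏_{i=0}^{n−1}(x^(2^i) + t^(2^i)) and Cₙ(x,t) = t^(2^n) + ∑_{k=1}^{n−1} t^(2^k)·∏_{i=k}^{n−1}(x^(2^i) + t^(2^i)). -/
/-!
One application of `Φ_A` maps `!![X, Y; 0, T]` to `!![X², (X + T) Y + T²; 0, T²]`, so the diagonal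
entries are squared and the corner entry obeys the affine recurrence `c ↦ (X + T) c + T²`.
Unrolling it from `c₀ = y` gives the product `Bₙ y` plus the solution `Cₙ` started at `0`.
-/

open Finset

section

variable {R : Type*} [CommRing R]

/-- Solution of `c (n + 1) = f n * c n + g (n + 1)` with `c 0 = 0`. -/
theorem sum_Ico_mul_prod_Ico_succ (f g : ℕ → R) (n : ℕ) :
    ∑ k ∈ Ico 1 (n + 2), g k * ∏ i ∈ Ico k (n + 1), f i =
      f n * ∑ k ∈ Ico 1 (n + 1), g k * ∏ i ∈ Ico k n, f i + g (n + 1) := by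
  have hsplit : ∀ k ∈ Ico 1 (n + 1),
      g k * ∏ i ∈ Ico k (n + 1), f i = f n * (g k * ∏ i ∈ Ico k n, f i) := by
    intro k hk
    rw [prod_Ico_succ_top (Nat.lt_succ_iff.mp (mem_Ico.mp hk).2)]
    ring
  rw [sum_Ico_succ_top (by omega : 1 ≤ n + 1), sum_congr rfl hsplit, ← mul_sum,
    Ico_self, prod_empty, mul_one]

theorem unitriangular_mul_upperTriangular_sq (X Y T : R) :
    !![1, 1; 0, 1] * !![X, Y; 0, T] ^ 2 = !![X ^ 2, (X + T) * Y + T ^ 2; 0, T ^ 2] := by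
  rw [sq, Matrix.mul_fin_two, Matrix.mul_fin_two]
  ext i j
  fin_cases i <;> fin_cases j <;> simp <;> ring

theorem iterate_unitriangular_mul_sq_upperTriangular (n : ℕ) (x y t : R) :
    (fun M : Matrix (Fin 2) (Fin 2) R => !![1, 1; 0, 1] * M ^ 2)^[n] !![x, y; 0, t] =
      !![x ^ 2 ^ n,
          (∏ i ∈ range n, (x ^ 2 ^ i + t ^ 2 ^ i)) * y +
            ∑ k ∈ Ico 1 (n + 1), t ^ 2 ^ k * ∏ i ∈ Ico k n, (x ^ 2 ^ i + t ^ 2 ^ i);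
         0, t ^ 2 ^ n] := by
  induction n with
  | zero => simp
  | succ n ih =>
    rw [Function.iterate_succ_apply', ih, unitriangular_mul_upperTriangular_sq, prod_range_succ,
      sum_Ico_mul_prod_Ico_succ, pow_succ 2 n, pow_mul, pow_mul]
    congr 4
    ring

end

theorem iterate_of_PhiA_nondiag (n : ℕ) (hn : 1 ≤ n) (x y t : ℂ) :
    (fun M : Matrix (Fin 2) (Fin 2) ℂ => (!![1, 1; 0, 1] : Matrix (Fin 2) (Fin 2) ℂ) * M ^ 2)^[n]
        !![x, y; 0, t] =
      !![x ^ 2 ^ n,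
          (∏ i ∈ Finset.range n, (x ^ 2 ^ i + t ^ 2 ^ i)) * y +
            (t ^ 2 ^ n + ∑ k ∈ Finset.Ico 1 n,
              t ^ 2 ^ k * ∏ i ∈ Finset.Ico k n, (x ^ 2 ^ i + t ^ 2 ^ i));
         0, t ^ 2 ^ n] := by
  rw [iterate_unitriangular_mul_sq_upperTriangular, sum_Ico_succ_top hn, Ico_self, prod_empty,
    mul_one, add_comm (∑ k ∈ Ico 1 n, _)]
end
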